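/- On a connected locally finite graph G=(V,E) with μ(x) ≥ μ_min > 0 and Σ_{y∼x}ω_{xy} ≤ C for all x, the finitely supported functions are dense in W^{2,2}(V): for every u with ∫_V(|Δu|² + |∇u|² + u²)dμ < ∞, the cutoffs u·η_k satisfy ∫_V |Δ(u·η_k − u)|² dμ → 0 as k → ∞ (in addition to convergence of the lower-order terms), where η_k is the piecewise-linear radial cutoff at scales k and 2k. -/

import Mathlib

open Filter Topology

structure GraphData (V : Type*) where
  ω : V → V → ℝ
  μ : V → ℝ
  sym : ∀ x y, ω x y = ω y x
  nonneg : ∀ x y, 0 ≤ ω x y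
  loopless : ∀ x, ω x x = 0
  locfin : ∀ x, {y | ω x y ≠ 0}.Finite
  μpos : ∀ x, 0 < μ x

variable {V : Type*}

noncomputable def GraphData.lap (g : GraphData V) (u : V → ℝ) (x : V) : ℝ :=
  (1 / g.μ x) * ∑' y, g.ω x y * (u y - u x)

noncomputable def GraphData.grad (g : GraphData V) (u v : V → ℝ) (x : V) : ℝ :=
  (1 / (2 * g.μ x)) * ∑' y, g.ω x y * (u y - u x) * (v y - v x)

noncomputable def GraphData.integral (g : GraphData V) (f : V → ℝ) : ℝ :=
  ∑' x, g.μ x * f x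

def GraphData.G (g : GraphData V) : SimpleGraph V where
  Adj x y := 0 < g.ω x y
  symm := ⟨fun x y (h : 0 < g.ω x y) => (by rwa [g.sym y x] : 0 < g.ω y x)⟩
  loopless := ⟨fun x (h : 0 < g.ω x x) => by simp [g.loopless x] at h⟩

noncomputable def GraphData.enormSq (g : GraphData V) (a : V → ℝ) (lam : ℝ) (u : V → ℝ) : ℝ :=
  ∑' x, g.μ x * ((g.lap u x) ^ 2 + g.grad u u x + (lam * a x + 1) * (u x) ^ 2)

def GraphData.memE (g : GraphData V) (a : V → ℝ) (lam : ℝ) (u : V → ℝ) : Prop :=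
  Summable fun x => g.μ x * ((g.lap u x) ^ 2 + g.grad u u x + (lam * a x + 1) * (u x) ^ 2)

noncomputable def GraphData.lpInt (g : GraphData V) (p : ℝ) (u : V → ℝ) : ℝ :=
  ∑' x, g.μ x * |u x| ^ p

noncomputable def GraphData.Jlam (g : GraphData V) (a : V → ℝ) (lam p : ℝ) (u : V → ℝ) : ℝ :=
  (1 / 2) * g.enormSq a lam u - (1 / p) * g.lpInt p u

def GraphData.Nehari (g : GraphData V) (a : V → ℝ) (lam p : ℝ) : Set (V → ℝ) :=
  {u | u ≠ 0 ∧ g.memE a lam u ∧ g.enormSq a lam u = g.lpInt p u}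

noncomputable def GraphData.Jderiv (g : GraphData V) (a : V → ℝ) (lam p : ℝ) (u φ : V → ℝ) : ℝ :=
  (∑' x, g.μ x * (g.lap u x * g.lap φ x + g.grad u φ x + (lam * a x + 1) * u x * φ x))
    - ∑' x, g.μ x * (|u x| ^ (p - 2) * u x * φ x)

def GraphData.bdry (g : GraphData V) (Ω : Set V) : Set V :=
  {y | y ∉ Ω ∧ ∃ x ∈ Ω, 0 < g.ω x y}

noncomputable def GraphData.hnormSq (g : GraphData V) (Ω : Set V) (u : V → ℝ) : ℝ :=
  (∑' x : ↥(Ω ∪ g.bdry Ω), g.μ x * ((g.lap u x) ^ 2 + g.grad u u x))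
    + ∑' x : Ω, g.μ x * (u x) ^ 2

noncomputable def GraphData.lpIntO (g : GraphData V) (Ω : Set V) (p : ℝ) (u : V → ℝ) : ℝ :=
  ∑' x : Ω, g.μ x * |u x| ^ p

noncomputable def GraphData.JOmega (g : GraphData V) (Ω : Set V) (p : ℝ) (u : V → ℝ) : ℝ :=
  (1 / 2) * g.hnormSq Ω u - (1 / p) * g.lpIntO Ω p u

def GraphData.memH (g : GraphData V) (Ω : Set V) (u : V → ℝ) : Prop :=
  ∀ x ∉ Ω, u x = 0

def GraphData.NehariO (g : GraphData V) (Ω : Set V) (p : ℝ) : Set (V → ℝ) :=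
  {u | u ≠ 0 ∧ g.memH Ω u ∧ g.hnormSq Ω u = g.lpIntO Ω p u}

noncomputable def GraphData.JderivO (g : GraphData V) (Ω : Set V) (p : ℝ) (u φ : V → ℝ) : ℝ :=
  (∑' x : ↥(Ω ∪ g.bdry Ω), g.μ x * (g.lap u x * g.lap φ x + g.grad u φ x))
    + (∑' x : Ω, g.μ x * (u x * φ x))
    - ∑' x : Ω, g.μ x * (|u x| ^ (p - 2) * u x * φ x)

/-- The piecewise-linear radial cutoff η_k at scales k and 2k around x₀. -/
noncomputable def GraphData.cutoff (g : GraphData V) (x₀ : V) (k : ℕ) (x : V) : ℝ :=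
  if g.G.dist x x₀ ≤ k then 1
  else if g.G.dist x x₀ < 2 * k then ((2 * k : ℝ) - g.G.dist x x₀) / k
  else 0

/-!
Write `v_k = u η_k - u`. Since `0 ≤ η_k ≤ 1` we have `v_k² ≤ u²`, and Cauchy–Schwarz with
`∑_y ω_xy ≤ C` bounds `μ (Δv_k)²`, `μ |∇v_k|²` and `μ v_k²` at `x`, uniformly in `k`, by a multiple
of `∑_y ω_xy u(y)² + C u(x)²` plus `μ u²`. This majorant is summable over `x` because
`∑_x ∑_y ω_xy u(y)² = ∑_y deg(y) u(y)² ≤ C ∑_y u(y)²` and `μ ≥ μ_min > 0`. Since `η_k = 1` on the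
ball of radius `k`, `v_k` vanishes at `x` and at its neighbours once `k > d(x, x₀)`, hence so do
all three densities at `x`; dominated convergence for series gives the limits.
-/

namespace GraphData

variable (g : GraphData V)

lemma ω_eq_zero_of_not_adj {x y : V} (h : ¬g.G.Adj x y) : g.ω x y = 0 :=
  le_antisymm (not_lt.mp h) (g.nonneg x y)

lemma summable_ω_mul (x : V) (f : V → ℝ) : Summable fun y => g.ω x y * f y := by
  refine summable_of_ne_finset_zero (s := (g.locfin x).toFinset) fun y hy => ?_
  simp only [Set.Finite.mem_toFinset, Set.mem_ofPred_eq, not_not] at hy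
  rw [hy, zero_mul]

lemma sq_tsum_ω_mul_le (x : V) (a : V → ℝ) :
    (∑' y, g.ω x y * a y) ^ 2 ≤ (∑' y, g.ω x y) * ∑' y, g.ω x y * a y ^ 2 := by
  set s := (g.locfin x).toFinset
  have hs : ∀ y ∉ s, g.ω x y = 0 := fun y hy => by simpa [s] using hy
  rw [tsum_eq_sum (s := s) fun y hy => by rw [hs y hy, zero_mul], tsum_eq_sum (s := s) hs,
    tsum_eq_sum (s := s) fun y hy => by rw [hs y hy, zero_mul]]
  exact Finset.sum_sq_le_sum_mul_sum_of_sq_le_mul s (fun y _ => g.nonneg x y)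
    (fun y _ => mul_nonneg (g.nonneg x y) (sq_nonneg _)) fun y _ => le_of_eq (by ring)

lemma summable_tsum_ω_mul {C : ℝ} (hω : ∀ x, ∑' y, g.ω x y ≤ C) {f : V → ℝ}
    (hf₀ : ∀ y, 0 ≤ f y) (hf : Summable f) : Summable fun x => ∑' y, g.ω x y * f y := by
  have h₀ : ∀ p : V × V, 0 ≤ g.ω p.1 p.2 * f p.2 := fun p => mul_nonneg (g.nonneg _ _) (hf₀ _)
  have hswap : Summable fun p : V × V => g.ω p.1 p.2 * f p.1 := by
    refine (summable_prod_of_nonneg fun p => mul_nonneg (g.nonneg _ _) (hf₀ _)).2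
      ⟨fun x => g.summable_ω_mul x fun _ => f x, ?_⟩
    refine (hf.mul_left C).of_nonneg_of_le
      (fun x => tsum_nonneg fun y => mul_nonneg (g.nonneg x y) (hf₀ x)) fun x => ?_
    rw [show ∑' y, g.ω x y * f x = _ from tsum_mul_right]
    exact mul_le_mul_of_nonneg_right (hω x) (hf₀ x)
  refine ((summable_prod_of_nonneg h₀).1 (hswap.prod_symm.congr fun p => ?_)).2
  simp [g.sym p.1 p.2]

lemma summable_of_summable_μ_mul {μmin : ℝ} (hμmin : 0 < μmin) (hμ : ∀ x, μmin ≤ g.μ x)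
    {f : V → ℝ} (hf₀ : ∀ x, 0 ≤ f x) (hf : Summable fun x => g.μ x * f x) : Summable f :=
  (hf.div_const μmin).of_nonneg_of_le hf₀ fun x => by
    rw [le_div_iff₀ hμmin, mul_comm]
    exact mul_le_mul_of_nonneg_right (hμ x) (hf₀ x)

lemma ω_mul_sub_eq_zero_of_forall_adj {w : V → ℝ} {x : V}
    (h : ∀ y, g.G.Adj x y → w y = w x) (y : V) : g.ω x y * (w y - w x) = 0 := by
  by_cases hxy : g.G.Adj x y
  · rw [h y hxy, sub_self, mul_zero]
  · rw [g.ω_eq_zero_of_not_adj hxy, zero_mul]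

lemma lap_eq_zero_of_forall_adj {w : V → ℝ} {x : V} (h : ∀ y, g.G.Adj x y → w y = w x) :
    g.lap w x = 0 := by
  simp [lap, g.ω_mul_sub_eq_zero_of_forall_adj h]

lemma grad_self_eq_zero_of_forall_adj {w : V → ℝ} {x : V}
    (h : ∀ y, g.G.Adj x y → w y = w x) : g.grad w w x = 0 := by
  simp [grad, g.ω_mul_sub_eq_zero_of_forall_adj h]

lemma mul_grad_self (w : V → ℝ) (x : V) :
    g.μ x * g.grad w w x = (∑' y, g.ω x y * (w y - w x) ^ 2) / 2 := by
  have := (g.μpos x).ne'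
  simp only [grad, mul_assoc, ← sq]
  field_simp

lemma grad_self_nonneg (w : V → ℝ) (x : V) : 0 ≤ g.grad w w x := by
  refine nonneg_of_mul_nonneg_right ?_ (g.μpos x)
  rw [mul_grad_self]
  exact div_nonneg (tsum_nonneg fun y => mul_nonneg (g.nonneg x y) (sq_nonneg _)) two_pos.le

lemma mul_sq_lap_le (w : V → ℝ) (x : V) :
    g.μ x * g.lap w x ^ 2 ≤ (∑' y, g.ω x y) / g.μ x * ∑' y, g.ω x y * (w y - w x) ^ 2 := by
  have := g.μpos x
  calc g.μ x * g.lap w x ^ 2 = (∑' y, g.ω x y * (w y - w x)) ^ 2 / g.μ x := by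
        rw [lap]; field_simp
    _ ≤ (∑' y, g.ω x y) * (∑' y, g.ω x y * (w y - w x) ^ 2) / g.μ x := by
        gcongr; exact g.sq_tsum_ω_mul_le x _
    _ = _ := by ring

lemma tsum_ω_mul_sq_sub_le {C : ℝ} (hω : ∀ x, ∑' y, g.ω x y ≤ C) {u w : V → ℝ}
    (hw : ∀ y, w y ^ 2 ≤ u y ^ 2) (x : V) :
    ∑' y, g.ω x y * (w y - w x) ^ 2 ≤ 2 * ∑' y, g.ω x y * u y ^ 2 + 2 * C * u x ^ 2 := by
  have split : ∀ y, g.ω x y * (2 * u y ^ 2 + 2 * u x ^ 2)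
      = 2 * (g.ω x y * u y ^ 2) + g.ω x y * (2 * u x ^ 2) := fun y => by ring
  calc ∑' y, g.ω x y * (w y - w x) ^ 2 ≤ ∑' y, g.ω x y * (2 * u y ^ 2 + 2 * u x ^ 2) := by
        refine (g.summable_ω_mul x _).tsum_le_tsum (fun y => ?_) (g.summable_ω_mul x _)
        have := g.nonneg x y
        gcongr
        nlinarith [sq_nonneg (w y + w x), hw y, hw x]
    _ = 2 * ∑' y, g.ω x y * u y ^ 2 + 2 * (∑' y, g.ω x y) * u x ^ 2 := by
        rw [tsum_congr split, ((g.summable_ω_mul x _).mul_left 2).tsum_add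
          (g.summable_ω_mul x fun _ => 2 * u x ^ 2), tsum_mul_left, tsum_mul_right]
        ring
    _ ≤ _ := by gcongr; exact hω x

lemma mul_sq_lap_le_of_sq_le {μmin C : ℝ} (hω : ∀ x, ∑' y, g.ω x y ≤ C) (hμmin : 0 < μmin)
    (hμ : ∀ x, μmin ≤ g.μ x) {u w : V → ℝ} (hw : ∀ y, w y ^ 2 ≤ u y ^ 2) (x : V) :
    g.μ x * g.lap w x ^ 2 ≤ C / μmin * (2 * ∑' y, g.ω x y * u y ^ 2 + 2 * C * u x ^ 2) := by
  have hC : 0 ≤ C := (tsum_nonneg (g.nonneg x)).trans (hω x)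
  refine (g.mul_sq_lap_le w x).trans (mul_le_mul (div_le_div₀ hC (hω x) hμmin (hμ x))
    (g.tsum_ω_mul_sq_sub_le hω hw x) ?_ (div_nonneg hC hμmin.le))
  exact tsum_nonneg fun y => mul_nonneg (g.nonneg x y) (sq_nonneg _)

lemma mul_grad_self_le_of_sq_le {C : ℝ} (hω : ∀ x, ∑' y, g.ω x y ≤ C) {u w : V → ℝ}
    (hw : ∀ y, w y ^ 2 ≤ u y ^ 2) (x : V) :
    g.μ x * g.grad w w x ≤ (2 * ∑' y, g.ω x y * u y ^ 2 + 2 * C * u x ^ 2) / 2 := by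
  rw [g.mul_grad_self]
  exact div_le_div_of_nonneg_right (g.tsum_ω_mul_sq_sub_le hω hw x) two_pos.le

lemma cutoff_of_dist_le {x₀ x : V} {k : ℕ} (h : g.G.dist x x₀ ≤ k) : g.cutoff x₀ k x = 1 :=
  if_pos h

lemma cutoff_mem_Icc (x₀ : V) (k : ℕ) (x : V) : g.cutoff x₀ k x ∈ Set.Icc 0 1 := by
  unfold cutoff
  split_ifs with h₁ h₂
  · simp
  · have hk : (0 : ℝ) < k := by exact_mod_cast (by omega : 0 < k)
    have h₁ : (k : ℝ) < g.G.dist x x₀ := by exact_mod_cast not_le.mp h₁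
    have h₂ : (g.G.dist x x₀ : ℝ) < 2 * k := by exact_mod_cast h₂
    constructor
    · exact div_nonneg (by linarith) hk.le
    · rw [div_le_one hk]; linarith
  · simp

lemma sq_mul_cutoff_sub_self_le (u : V → ℝ) (x₀ : V) (k : ℕ) (x : V) :
    (u x * g.cutoff x₀ k x - u x) ^ 2 ≤ u x ^ 2 := by
  obtain ⟨h₀, h₁⟩ := g.cutoff_mem_Icc x₀ k x
  have : (g.cutoff x₀ k x - 1) ^ 2 ≤ 1 := by nlinarith
  calc (u x * g.cutoff x₀ k x - u x) ^ 2 = u x ^ 2 * (g.cutoff x₀ k x - 1) ^ 2 := by ring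
    _ ≤ u x ^ 2 := mul_le_of_le_one_right (sq_nonneg _) this

lemma eventually_cutoff_eq_one (x₀ x : V) :
    ∀ᶠ k : ℕ in atTop, g.cutoff x₀ k x = 1 ∧ ∀ y, g.G.Adj x y → g.cutoff x₀ k y = 1 := by
  filter_upwards [eventually_ge_atTop (g.G.dist x x₀ + 1)] with k hk
  refine ⟨g.cutoff_of_dist_le (by omega), fun y hxy => g.cutoff_of_dist_le ?_⟩
  have h₁ : g.G.dist y x = 1 := SimpleGraph.dist_eq_one_iff_adj.2 hxy.symm
  have := hxy.symm.reachable.dist_triangle_left x₀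
  omega

end GraphData

theorem tendsto_tsum_zero_of_dominated {α β : Type*} {l : Filter α} {F : α → β → ℝ}
    {B : β → ℝ} (hB : Summable B) (hF₀ : ∀ n i, 0 ≤ F n i) (hFB : ∀ n i, F n i ≤ B i)
    (hF : ∀ i, ∀ᶠ n in l, F n i = 0) : Tendsto (fun n => ∑' i, F n i) l (𝓝 0) := by
  simpa using tendsto_tsum_of_dominated_convergence hB (g := 0)
    (fun i => tendsto_const_nhds.congr' ((hF i).mono fun n h => h.symm))
    (Eventually.of_forall fun n i => by rw [Real.norm_of_nonneg (hF₀ n i)]; exact hFB n i)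

theorem stmt17_general (g : GraphData V) (μmin C : ℝ) (hμmin : 0 < μmin)
    (hμ : ∀ x, μmin ≤ g.μ x) (hω : ∀ x, ∑' y, g.ω x y ≤ C)
    (x₀ : V)
    (u : V → ℝ)
    (hu : Summable fun x => g.μ x * ((g.lap u x) ^ 2 + g.grad u u x + (u x) ^ 2)) :
    Filter.Tendsto (fun k : ℕ => ∑' x, g.μ x *
        (g.lap (fun y => u y * g.cutoff x₀ k y - u y) x) ^ 2) Filter.atTop (nhds 0)
    ∧ Filter.Tendsto (fun k : ℕ => ∑' x, g.μ x *
        ((g.lap (fun y => u y * g.cutoff x₀ k y - u y) x) ^ 2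
          + g.grad (fun y => u y * g.cutoff x₀ k y - u y)
              (fun y => u y * g.cutoff x₀ k y - u y) x
          + (u x * g.cutoff x₀ k x - u x) ^ 2)) Filter.atTop (nhds 0) := by
  set v : ℕ → V → ℝ := fun k y => u y * g.cutoff x₀ k y - u y
  have hv : ∀ k y, v k y ^ 2 ≤ u y ^ 2 := g.sq_mul_cutoff_sub_self_le u x₀
  have hμu : Summable fun x => g.μ x * u x ^ 2 := hu.of_nonneg_of_le
    (fun x => mul_nonneg (g.μpos x).le (sq_nonneg _)) fun x => mul_le_mul_of_nonneg_left
      (le_add_of_nonneg_left (add_nonneg (sq_nonneg _) (g.grad_self_nonneg u x))) (g.μpos x).le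
  have hu₂ := g.summable_of_summable_μ_mul hμmin hμ (fun x => sq_nonneg (u x)) hμu
  set D : V → ℝ := fun x => 2 * ∑' y, g.ω x y * u y ^ 2 + 2 * C * u x ^ 2
  have hD : Summable D :=
    ((g.summable_tsum_ω_mul hω (fun _ => sq_nonneg _) hu₂).mul_left 2).add (hu₂.mul_left _)
  have hvanish : ∀ x, ∀ᶠ k in atTop,
      v k x = 0 ∧ g.lap (v k) x = 0 ∧ g.grad (v k) (v k) x = 0 := fun x => by
    filter_upwards [g.eventually_cutoff_eq_one x₀ x] with k ⟨hx, hadj⟩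
    have hconst : ∀ y, g.G.Adj x y → v k y = v k x := fun y hxy => by
      simp [v, hx, hadj y hxy]
    exact ⟨by simp [v, hx], g.lap_eq_zero_of_forall_adj hconst,
      g.grad_self_eq_zero_of_forall_adj hconst⟩
  refine ⟨tendsto_tsum_zero_of_dominated (hD.mul_left (C / μmin))
      (fun k x => mul_nonneg (g.μpos x).le (sq_nonneg _))
      (fun k => g.mul_sq_lap_le_of_sq_le hω hμmin hμ (hv k)) fun x => ?_,
    tendsto_tsum_zero_of_dominated (((hD.mul_left (C / μmin)).add (hD.div_const 2)).add hμu)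
      (fun k x => mul_nonneg (g.μpos x).le (add_nonneg (add_nonneg (sq_nonneg _)
        (g.grad_self_nonneg (v k) x)) (sq_nonneg _)))
      (fun k x => ?_) fun x => ?_⟩
  · filter_upwards [hvanish x] with k ⟨_, h, _⟩
    change g.μ x * g.lap (v k) x ^ 2 = 0
    simp [h]
  · change g.μ x * (g.lap (v k) x ^ 2 + g.grad (v k) (v k) x + v k x ^ 2) ≤ _
    rw [mul_add, mul_add]
    exact add_le_add (add_le_add (g.mul_sq_lap_le_of_sq_le hω hμmin hμ (hv k) x)
      (g.mul_grad_self_le_of_sq_le hω (hv k) x))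
      (mul_le_mul_of_nonneg_left (hv k x) (g.μpos x).le)
  · filter_upwards [hvanish x] with k ⟨h₀, h₁, h₂⟩
    change g.μ x * (g.lap (v k) x ^ 2 + g.grad (v k) (v k) x + v k x ^ 2) = 0
    simp [h₀, h₁, h₂]

/-- density of finitely supported functions in W^{2,2}(V) via cutoffs. -/
theorem stmt17 (g : GraphData V) (μmin C : ℝ) (hμmin : 0 < μmin)
    (hμ : ∀ x, μmin ≤ g.μ x) (hω : ∀ x, ∑' y, g.ω x y ≤ C)
    (hconn : g.G.Connected) (x₀ : V)
    (u : V → ℝ)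
    (hu : Summable fun x => g.μ x * ((g.lap u x) ^ 2 + g.grad u u x + (u x) ^ 2)) :
    Filter.Tendsto (fun k : ℕ => ∑' x, g.μ x *
        (g.lap (fun y => u y * g.cutoff x₀ k y - u y) x) ^ 2) Filter.atTop (nhds 0)
    ∧ Filter.Tendsto (fun k : ℕ => ∑' x, g.μ x *
        ((g.lap (fun y => u y * g.cutoff x₀ k y - u y) x) ^ 2
          + g.grad (fun y => u y * g.cutoff x₀ k y - u y)
              (fun y => u y * g.cutoff x₀ k y - u y) x
          + (u x * g.cutoff x₀ k x - u x) ^ 2)) Filter.atTop (nhds 0) :=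
  stmt17_general g μmin C hμmin hμ hω x₀ u hu
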